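/- arXiv:2401.01890 — 3 statements merged into one kernel-verified Lean document; each statement's English description precedes it below -/
import Mathlib

section
/- In the Tamari lattice, any tree u with t ≤ u ≤ w, where t = t₀ ∘ (t₁,…,t_r) and w = w₀ ∘ (w₁,…,w_r) with |tᵢ| = |wᵢ| = nᵢ leaves for each 1 ≤ i ≤ r and t₀, w₀ having r leaves, is itself of the form u = u₀ ∘ (u₁,…,u_r) with u₀ having r leaves and uᵢ having nᵢ leaves. -/
/-!
Number the leaves of a tree with `n` leaves `1, …, n`. Its internal nodes are indexed by their
positions `i ∈ (0, n)` (the last leaf of the left subtree), and the node at `i` spans an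
interval `(a, b]` of leaves. A rotation moves both endpoints of every span to the right, so
`t ≤ u` implies `a_t(i) ≤ a_u(i)` and `b_t(i) ≤ b_u(i)` for all `i`.

Let `B` be the set of partial sums of the block sizes `nᵢ`. A tree is a grafting with these block
sizes iff every node either has `i, a, b ∈ B` or has no point of `B` strictly inside `(a, b)`. This
condition passes from `t` and `w` to any `u` between them: for `i ∉ B` the span of `u` is squeezed
between spans of `t` and `w` that avoid `B`; for `i ∈ B` the spans in `t` and `w` have their ends
in `B`, and comparing with the node of `u` at the point of `B` nearest to `a` (resp. `b`) forces
the ends of the span in `u` into `B`.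
-/

open Classical

/-- Planar binary rooted trees. `leaf` is the unique tree `|` with one leaf. -/
inductive PBT : Type
  | leaf : PBT
  | node : PBT → PBT → PBT
  deriving DecidableEq

/-- Number of leaves of a planar binary rooted tree. -/
def leavesCount : PBT → ℕ
  | .leaf => 1
  | .node l r => leavesCount l + leavesCount r

/-- Graft the tree `w` onto the leftmost (first) leaf of `t`. -/
def graft1 : PBT → PBT → PBT
  | .leaf, w => w
  | .node l r, w => .node (graft1 l w) r

/-- The product `t ⋋ w := w ∘₁ (t ∨ |)`. -/
def lprod (t w : PBT) : PBT := graft1 w (.node t .leaf)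

/-- A tree is `⋋`-irreducible if it is not a product of two (nonempty) trees. -/
def Irr (t : PBT) : Prop := ¬ ∃ u w : PBT, t = lprod u w

/-- One covering move of the Tamari order: a right rotation
`(a ∨ b) ∨ c ↦ a ∨ (b ∨ c)` applied at some internal node. -/
inductive TStep : PBT → PBT → Prop
  | rot (a b c : PBT) : TStep (.node (.node a b) c) (.node a (.node b c))
  | left {a a' : PBT} (c : PBT) : TStep a a' → TStep (.node a c) (.node a' c)
  | right (a : PBT) {c c' : PBT} : TStep c c' → TStep (.node a c) (.node a c')

/-- The Tamari order on planar binary rooted trees: the reflexive transitive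
closure of the rotation moves. -/
def tle : PBT → PBT → Prop := Relation.ReflTransGen TStep

/-- Auxiliary function: graft trees from the list `ws` onto the leaves of `t`
from left to right, returning the resulting tree and the unused trees. -/
def graftAux : PBT → List PBT → PBT × List PBT
  | .leaf, [] => (.leaf, [])
  | .leaf, w :: ws => (w, ws)
  | .node l r, ws =>
      let p := graftAux l ws
      let q := graftAux r p.2
      (.node p.1 q.1, q.2)

/-- The grafting `t ∘ (w₁, …, w_r)`: graft the trees of the list `ws`
onto the leaves of `t`, from left to right. -/
def graftMany (t : PBT) (ws : List PBT) : PBT := (graftAux t ws).1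

theorem leavesCount_pos (t : PBT) : 0 < leavesCount t := by
  induction t with
  | leaf => exact Nat.one_pos
  | node l r ihl _ => simp only [leavesCount]; omega

/-- `HasNode u i a b`: `u` has an internal node whose left subtree ends at leaf `i` and whose
subtree consists of the leaves `a + 1, …, b` (leaves are numbered from `1`). -/
inductive HasNode : PBT → ℕ → ℕ → ℕ → Prop
  | root (L R : PBT) : HasNode (.node L R) (leavesCount L) 0 (leavesCount L + leavesCount R)
  | left {L : PBT} (R : PBT) {i a b : ℕ} : HasNode L i a b → HasNode (.node L R) i a b
  | right (L : PBT) {R : PBT} {i a b : ℕ} : HasNode R i a b →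
      HasNode (.node L R) (i + leavesCount L) (a + leavesCount L) (b + leavesCount L)

namespace HasNode

theorem right' (L : PBT) {R : PBT} {i a b i' a' b' : ℕ} (h : HasNode R i a b)
    (hi : i' = i + leavesCount L) (ha : a' = a + leavesCount L) (hb : b' = b + leavesCount L) :
    HasNode (.node L R) i' a' b' := by
  subst hi ha hb; exact h.right L

theorem bounds {u : PBT} {i a b : ℕ} (h : HasNode u i a b) :
    a < i ∧ i < b ∧ b ≤ leavesCount u := by
  induction h with
  | root L R =>
    have := leavesCount_pos L; have := leavesCount_pos R; simp only [leavesCount]; omega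
  | left R _ ih => have := leavesCount_pos R; simp only [leavesCount]; omega
  | right L _ ih => simp only [leavesCount]; omega

theorem of_node {L R : PBT} {i a b : ℕ} (h : HasNode (.node L R) i a b) :
    (i = leavesCount L ∧ a = 0 ∧ b = leavesCount L + leavesCount R) ∨ HasNode L i a b ∨
      ∃ i' a' b', HasNode R i' a' b' ∧
        i = i' + leavesCount L ∧ a = a' + leavesCount L ∧ b = b' + leavesCount L := by
  cases h with
  | root => exact .inl ⟨rfl, rfl, rfl⟩
  | left _ h => exact .inr (.inl h)
  | right _ h => exact .inr (.inr ⟨_, _, _, h, rfl, rfl, rfl⟩)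

theorem unique {u : PBT} {i a b a' b' : ℕ} (h : HasNode u i a b) (h' : HasNode u i a' b') :
    a = a' ∧ b = b' := by
  induction u generalizing i a b a' b' with
  | leaf => cases h
  | node L R ihL ihR =>
    rcases h.of_node with ⟨rfl, rfl, rfl⟩ | hL | ⟨i₁, a₁, b₁, hR, rfl, rfl, rfl⟩ <;>
      rcases h'.of_node with ⟨hi, rfl, rfl⟩ | hL' | ⟨i₂, a₂, b₂, hR', hi, rfl, rfl⟩
    · exact ⟨rfl, rfl⟩
    · have := hL'.bounds; omega
    · have := hR'.bounds; omega
    · have := hL.bounds; omega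
    · exact ihL hL hL'
    · have := hL.bounds; have := hR'.bounds; omega
    · have := hR.bounds; omega
    · have := hR.bounds; have := hL'.bounds; omega
    · obtain rfl : i₁ = i₂ := by omega
      obtain ⟨rfl, rfl⟩ := ihR hR hR'
      exact ⟨rfl, rfl⟩

end HasNode

theorem exists_hasNode {u : PBT} {i : ℕ} (h0 : 0 < i) (hi : i < leavesCount u) :
    ∃ a b, HasNode u i a b := by
  induction u generalizing i with
  | leaf => simp only [leavesCount] at hi; omega
  | node L R ihL ihR =>
    simp only [leavesCount] at hi
    rcases lt_trichotomy i (leavesCount L) with h | rfl | h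
    · obtain ⟨a, b, hL⟩ := ihL h0 h
      exact ⟨a, b, hL.left R⟩
    · exact ⟨_, _, .root L R⟩
    · obtain ⟨a, b, hR⟩ := ihR (i := i - leavesCount L) (by omega) (by omega)
      exact ⟨_, _, hR.right' L (by omega) rfl rfl⟩

theorem HasNode.exists_nested {u : PBT} {i a b j : ℕ} (h : HasNode u i a b) (haj : a < j)
    (hjb : j < b) : ∃ a' b', HasNode u j a' b' ∧ a ≤ a' ∧ b' ≤ b := by
  induction h generalizing j with
  | root L R =>
    obtain ⟨a', b', hj⟩ :=
      exists_hasNode (u := .node L R) haj (by simpa [leavesCount] using hjb)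
    have := hj.bounds
    exact ⟨a', b', hj, by omega, by simpa [leavesCount] using this.2.2⟩
  | left R _ ih =>
    obtain ⟨a', b', hj, ha, hb⟩ := ih haj hjb
    exact ⟨a', b', hj.left R, ha, hb⟩
  | right L _ ih =>
    obtain ⟨a', b', hj, ha, hb⟩ := ih (j := j - leavesCount L) (by omega) (by omega)
    exact ⟨_, _, hj.right' L (by omega) rfl rfl, by omega, by omega⟩

def SpansLE (x y : PBT) : Prop :=
  ∀ i a b, HasNode x i a b → ∃ a' b', HasNode y i a' b' ∧ a ≤ a' ∧ b ≤ b'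

theorem SpansLE.refl (x : PBT) : SpansLE x x := fun _ a b h => ⟨a, b, h, le_rfl, le_rfl⟩

theorem SpansLE.trans {x y z : PBT} (hxy : SpansLE x y) (hyz : SpansLE y z) : SpansLE x z := by
  intro i a b h
  obtain ⟨a', b', h', ha', hb'⟩ := hxy i a b h
  obtain ⟨a'', b'', h'', ha'', hb''⟩ := hyz i a' b' h'
  exact ⟨a'', b'', h'', ha'.trans ha'', hb'.trans hb''⟩

theorem SpansLE.exists_le {x y : PBT} (hxy : SpansLE x y) (hlc : leavesCount x = leavesCount y)
    {i a b : ℕ} (h : HasNode y i a b) : ∃ a' b', HasNode x i a' b' ∧ a' ≤ a ∧ b' ≤ b := by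
  have := h.bounds
  obtain ⟨a', b', hx⟩ := exists_hasNode (u := x) (i := i) (by omega) (by omega)
  obtain ⟨a'', b'', hy, ha, hb⟩ := hxy i a' b' hx
  obtain ⟨rfl, rfl⟩ := hy.unique h
  exact ⟨a', b', hx, ha, hb⟩

theorem TStep.leavesCount_eq {x y : PBT} (h : TStep x y) : leavesCount x = leavesCount y := by
  induction h with
  | rot => simp only [leavesCount]; omega
  | left _ _ ih => simp only [leavesCount]; omega
  | right _ _ ih => simp only [leavesCount]; omega

theorem TStep.spansLE {x y : PBT} (h : TStep x y) : SpansLE x y := by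
  induction h with
  | rot A B C =>
    intro i a b hx
    rcases hx.of_node with ⟨rfl, rfl, rfl⟩ | hAB | ⟨i', a', b', hC, rfl, rfl, rfl⟩
    · exact ⟨_, _, (HasNode.root B C).right' A (by simp only [leavesCount]; omega) rfl rfl,
        by omega, by simp only [leavesCount]; omega⟩
    · rcases hAB.of_node with ⟨rfl, rfl, rfl⟩ | hA | ⟨i', a', b', hB, rfl, rfl, rfl⟩
      · exact ⟨_, _, .root A (.node B C), le_rfl, by simp only [leavesCount]; omega⟩
      · exact ⟨a, b, hA.left _, le_rfl, le_rfl⟩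
      · exact ⟨_, _, (hB.left C).right' A (by omega) (by omega) (by omega), le_rfl, le_rfl⟩
    · exact ⟨_, _, (hC.right B).right' A (by simp only [leavesCount]; omega)
        (by simp only [leavesCount]; omega) (by simp only [leavesCount]; omega), le_rfl, le_rfl⟩
  | @left A A' C hstep ih =>
    intro i a b hx
    have hlc := hstep.leavesCount_eq
    rcases hx.of_node with ⟨rfl, rfl, rfl⟩ | hA | ⟨i', a', b', hC, rfl, rfl, rfl⟩
    · rw [hlc]; exact ⟨_, _, .root A' C, le_rfl, le_rfl⟩
    · obtain ⟨a', b', hA', ha, hb⟩ := ih i a b hA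
      exact ⟨a', b', hA'.left C, ha, hb⟩
    · exact ⟨_, _, hC.right' A' (by omega) (by omega) (by omega), le_rfl, le_rfl⟩
  | @right A C C' hstep ih =>
    intro i a b hx
    have hlc := hstep.leavesCount_eq
    rcases hx.of_node with ⟨rfl, rfl, rfl⟩ | hA | ⟨i', a', b', hC, rfl, rfl, rfl⟩
    · exact ⟨_, _, HasNode.root A C', le_rfl, by omega⟩
    · exact ⟨a, b, hA.left C', le_rfl, le_rfl⟩
    · obtain ⟨a'', b'', hC', ha, hb⟩ := ih i' a' b' hC
      exact ⟨_, _, hC'.right A, by omega, by omega⟩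

theorem tle.leavesCount_eq {x y : PBT} (h : tle x y) : leavesCount x = leavesCount y := by
  induction h with
  | refl => rfl
  | tail _ hstep ih => exact ih.trans hstep.leavesCount_eq

theorem tle.spansLE {x y : PBT} (h : tle x y) : SpansLE x y := by
  induction h with
  | refl => exact .refl _
  | tail _ hstep ih => exact ih.trans hstep.spansLE

/-- When `S` is the set of block boundaries of a list of positive block sizes, this characterizes
the graftings `u₀ ∘ (u₁, …, u_r)` whose blocks `uᵢ` have these sizes. -/
def Compatible (S : Set ℕ) (u : PBT) : Prop :=
  ∀ i a b, HasNode u i a b → (i ∈ S ∧ a ∈ S ∧ b ∈ S) ∨ ∀ x ∈ S, x ≤ a ∨ b ≤ x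

section Sandwich

variable {S : Set ℕ} {t u w : PBT}

theorem Compatible.span_mem {i a b : ℕ} (hu : Compatible S u) (h : HasNode u i a b)
    (hi : i ∈ S) : a ∈ S ∧ b ∈ S := by
  have := h.bounds
  rcases hu i a b h with ⟨-, ha, hb⟩ | hS
  · exact ⟨ha, hb⟩
  · rcases hS i hi with _ | _ <;> omega

theorem exists_mem_span_left (hw : Compatible S w) (huw : SpansLE u w) {j a b : ℕ}
    (h : HasNode u j a b) (hj : j ∈ S) : ∃ a' ∈ S, a ≤ a' ∧ a' < j := by
  obtain ⟨a', b', hw', ha, -⟩ := huw j a b h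
  exact ⟨a', (hw.span_mem hw' hj).1, ha, hw'.bounds.1⟩

theorem exists_mem_span_right (ht : Compatible S t) (htu : SpansLE t u)
    (hlc : leavesCount t = leavesCount u) {j a b : ℕ} (h : HasNode u j a b) (hj : j ∈ S) :
    ∃ b' ∈ S, j < b' ∧ b' ≤ b := by
  obtain ⟨a', b', ht', -, hb⟩ := htu.exists_le hlc h
  exact ⟨b', (ht.span_mem ht' hj).2, ht'.bounds.2.1, hb⟩

/- Let `x` be the least element of `S` above `a`. The node at position `x` lies inside the span
`(a, b]`, and its left end is bounded above by an element of `S` below `x`, hence by `a`. -/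
theorem span_left_mem (hw : Compatible S w) (huw : SpansLE u w) {i a b : ℕ}
    (h : HasNode u i a b) (hi : i ∈ S) : a ∈ S := by
  have hab := h.bounds
  have hex : ∃ x, x ∈ S ∧ a < x := ⟨i, hi, hab.1⟩
  obtain ⟨hxS, hax⟩ := Nat.find_spec hex
  have hxi : Nat.find hex ≤ i := Nat.find_min' hex ⟨hi, hab.1⟩
  obtain ⟨a', b', hx, ha', -⟩ := h.exists_nested hax (by omega)
  obtain ⟨a'', ha''S, ha'', ha''x⟩ := exists_mem_span_left hw huw hx hxS
  have : ¬ (a'' ∈ S ∧ a < a'') := Nat.find_min hex ha''x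
  obtain rfl : a = a'' := by by_contra hne; exact this ⟨ha''S, by omega⟩
  exact ha''S

theorem span_right_mem (ht : Compatible S t) (htu : SpansLE t u)
    (hlc : leavesCount t = leavesCount u) {i a b : ℕ} (h : HasNode u i a b) (hi : i ∈ S) :
    b ∈ S := by
  have hab := h.bounds
  let P y := y ∈ S ∧ y < b
  set y := Nat.findGreatest P b
  obtain ⟨hyS, hyb⟩ : P y := Nat.findGreatest_spec (P := P) hab.2.1.le ⟨hi, hab.2.1⟩
  have hiy : i ≤ y := Nat.le_findGreatest (P := P) hab.2.1.le ⟨hi, hab.2.1⟩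
  obtain ⟨a', b', hy, -, hb'⟩ := h.exists_nested (j := y) (by omega) hyb
  obtain ⟨b'', hb''S, hyb'', hb''⟩ := exists_mem_span_right ht htu hlc hy hyS
  obtain rfl : b = b'' := by
    by_contra hne
    have : b'' ≤ y := Nat.le_findGreatest (P := P) (by omega) ⟨hb''S, by omega⟩
    omega
  exact hb''S

theorem Compatible.of_spansLE (ht : Compatible S t) (hw : Compatible S w) (htu : SpansLE t u)
    (huw : SpansLE u w) (hlc : leavesCount t = leavesCount u) : Compatible S u := by
  intro i a b h
  by_cases hi : i ∈ S
  · exact .inl ⟨hi, span_left_mem hw huw h hi, span_right_mem ht htu hlc h hi⟩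
  · right
    intro x hx
    obtain ⟨at', bt, ht', hat, hbt⟩ := htu.exists_le hlc h
    obtain ⟨aw, bw, hw', haw, hbw⟩ := huw i a b h
    have := ht'.bounds
    have := hw'.bounds
    have hxi : x ≠ i := by rintro rfl; exact hi hx
    rcases ht i at' bt ht' with ⟨hi', -⟩ | htS
    · exact absurd hi' hi
    rcases hw i aw bw hw' with ⟨hi', -⟩ | hwS
    · exact absurd hi' hi
    rcases htS x hx with _ | _ <;> rcases hwS x hx with _ | _ <;> omega

end Sandwich

theorem compatible_node_iff {S : Set ℕ} {L R : PBT} :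
    Compatible S (.node L R) ↔
      ((leavesCount L ∈ S ∧ 0 ∈ S ∧ leavesCount L + leavesCount R ∈ S) ∨
        ∀ x ∈ S, x ≤ 0 ∨ leavesCount L + leavesCount R ≤ x) ∧
      Compatible {x ∈ S | x ≤ leavesCount L} L ∧ Compatible {x | x + leavesCount L ∈ S} R := by
  constructor
  · intro hS
    refine ⟨hS _ _ _ (.root L R), fun i a b hL => ?_, fun i a b hR => ?_⟩
    · have := hL.bounds
      rcases hS i a b (hL.left R) with ⟨hi, ha, hb⟩ | hout
      · exact .inl ⟨⟨hi, by omega⟩, ⟨ha, by omega⟩, ⟨hb, by omega⟩⟩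
      · exact .inr fun x hx => hout x hx.1
    · rcases hS _ _ _ (hR.right L) with ⟨hi, ha, hb⟩ | hout
      · exact .inl ⟨hi, ha, hb⟩
      · exact .inr fun x hx => (hout _ hx).imp (by omega) (by omega)
  · rintro ⟨hroot, hL, hR⟩ i a b h
    rcases h.of_node with ⟨rfl, rfl, rfl⟩ | hl | ⟨i', a', b', hr, rfl, rfl, rfl⟩
    · exact hroot
    · have := hl.bounds
      rcases hL i a b hl with ⟨hi, ha, hb⟩ | hout
      · exact .inl ⟨hi.1, ha.1, hb.1⟩
      · refine .inr fun x hx => ?_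
        by_cases hxL : x ≤ leavesCount L
        · exact hout x ⟨hx, hxL⟩
        · exact .inr (by omega)
    · rcases hR i' a' b' hr with ⟨hi, ha, hb⟩ | hout
      · exact .inl ⟨hi, ha, hb⟩
      · refine .inr fun x hx => ?_
        by_cases hxL : leavesCount L ≤ x
        · have := hout (x - leavesCount L) (by simpa [Nat.sub_add_cancel hxL] using hx)
          omega
        · exact .inl (by omega)

/-- The partial sums `n₁ + ⋯ + nₘ`: the leaves at which a block of sizes `n₁, …, n_r` ends. -/
def blockBoundaries (ns : List ℕ) : Set ℕ := Set.range fun m => (ns.take m).sum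

theorem zero_mem_blockBoundaries (ns : List ℕ) : 0 ∈ blockBoundaries ns := ⟨0, rfl⟩

theorem sum_mem_blockBoundaries (ns : List ℕ) : ns.sum ∈ blockBoundaries ns :=
  ⟨ns.length, by simp⟩

theorem List.sum_take_le_sum (ns : List ℕ) (m : ℕ) : (ns.take m).sum ≤ ns.sum := by
  have := ns.sum_take_add_sum_drop m
  omega

theorem blockBoundaries_append_left (l₁ l₂ : List ℕ) :
    {x ∈ blockBoundaries (l₁ ++ l₂) | x ≤ l₁.sum} = blockBoundaries l₁ := by
  ext x
  constructor
  · rintro ⟨⟨m, rfl⟩, hle⟩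
    by_cases hm : m ≤ l₁.length
    · exact ⟨m, by simp [List.take_append, Nat.sub_eq_zero_of_le hm]⟩
    · refine ⟨l₁.length, ?_⟩
      simp only [List.take_append, List.take_of_length_le (not_le.mp hm).le, List.sum_append,
        List.take_length] at hle ⊢
      omega
  · rintro ⟨m, rfl⟩
    refine ⟨⟨min m l₁.length, ?_⟩, List.sum_take_le_sum l₁ m⟩
    simp [List.take_append, ← List.take_eq_take_min]

theorem blockBoundaries_append_right (l₁ l₂ : List ℕ) :
    {x | x + l₁.sum ∈ blockBoundaries (l₁ ++ l₂)} = blockBoundaries l₂ := by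
  ext x
  constructor
  · rintro ⟨m, hm⟩
    by_cases hml : m ≤ l₁.length
    · simp only [List.take_append, Nat.sub_eq_zero_of_le hml, List.take_zero, List.append_nil]
        at hm
      have := List.sum_take_le_sum l₁ m
      exact ⟨0, by simp; omega⟩
    · refine ⟨m - l₁.length, ?_⟩
      simp only [List.take_append, List.take_of_length_le (not_le.mp hml).le, List.sum_append]
        at hm
      show (l₂.take (m - l₁.length)).sum = x
      omega
  · rintro ⟨m, rfl⟩
    refine ⟨l₁.length + m, ?_⟩
    simp only [List.take_append, List.take_of_length_le (Nat.le_add_right _ _),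
      Nat.add_sub_cancel_left, List.sum_append]
    omega

theorem List.exists_eq_append_of_length_eq_add {α : Type*} {l : List α} {m n : ℕ}
    (h : l.length = m + n) : ∃ l₁ l₂, l = l₁ ++ l₂ ∧ l₁.length = m ∧ l₂.length = n :=
  ⟨l.take m, l.drop m, (l.take_append_drop m).symm, by simp; omega, by simp; omega⟩

theorem graftAux_append (t : PBT) {ws : List PBT} (hws : ws.length = leavesCount t)
    (rest : List PBT) : graftAux t (ws ++ rest) = (graftMany t ws, rest) := by
  induction t generalizing ws rest with
  | leaf =>
    obtain ⟨w, rfl⟩ := List.length_eq_one_iff.mp hws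
    rfl
  | node l r ihl ihr =>
    obtain ⟨ws₁, ws₂, rfl, h₁, h₂⟩ := List.exists_eq_append_of_length_eq_add hws
    simp only [graftMany, graftAux, List.append_assoc, ihl h₁, ihr h₂]

theorem graftMany_node_append {l r : PBT} {ws₁ ws₂ : List PBT}
    (h₁ : ws₁.length = leavesCount l) :
    graftMany (.node l r) (ws₁ ++ ws₂) = .node (graftMany l ws₁) (graftMany r ws₂) := by
  simp only [graftMany, graftAux, graftAux_append l h₁]

theorem leavesCount_graftMany (t : PBT) {ws : List PBT} (hws : ws.length = leavesCount t) :
    leavesCount (graftMany t ws) = (ws.map leavesCount).sum := by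
  induction t generalizing ws with
  | leaf =>
    obtain ⟨w, rfl⟩ := List.length_eq_one_iff.mp hws
    simp [graftMany, graftAux]
  | node l r ihl ihr =>
    obtain ⟨ws₁, ws₂, rfl, h₁, h₂⟩ := List.exists_eq_append_of_length_eq_add hws
    simp [graftMany_node_append h₁, leavesCount, ihl h₁, ihr h₂]

theorem compatible_graftMany (t : PBT) {ws : List PBT} (hws : ws.length = leavesCount t) :
    Compatible (blockBoundaries (ws.map leavesCount)) (graftMany t ws) := by
  induction t generalizing ws with
  | leaf =>
    obtain ⟨w, rfl⟩ := List.length_eq_one_iff.mp hws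
    intro i a b (h : HasNode w i a b)
    have := h.bounds
    refine .inr fun x ⟨m, hm⟩ => ?_
    obtain _ | m := m <;> simp at hm <;> omega
  | node l r ihl ihr =>
    obtain ⟨ws₁, ws₂, rfl, h₁, h₂⟩ := List.exists_eq_append_of_length_eq_add hws
    have hl := blockBoundaries_append_left (ws₁.map leavesCount) (ws₂.map leavesCount)
    have hr := blockBoundaries_append_right (ws₁.map leavesCount) (ws₂.map leavesCount)
    rw [graftMany_node_append h₁, compatible_node_iff, leavesCount_graftMany l h₁,
      leavesCount_graftMany r h₂, List.map_append, hl, hr]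
    refine ⟨.inl ⟨?_, zero_mem_blockBoundaries _, ?_⟩, ihl h₁, ihr h₂⟩
    · have := sum_mem_blockBoundaries (ws₁.map leavesCount)
      rw [← hl] at this
      exact this.1
    · simpa using sum_mem_blockBoundaries (ws₁.map leavesCount ++ ws₂.map leavesCount)

theorem eq_singleton_of_no_inner_boundary {ns : List ℕ} (hpos : ∀ n ∈ ns, 0 < n)
    (hsum : 0 < ns.sum) (h : ∀ x ∈ blockBoundaries ns, x ≤ 0 ∨ ns.sum ≤ x) : ns = [ns.sum] := by
  rcases ns with _ | ⟨n, _ | ⟨m, ns⟩⟩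
  · simp at hsum
  · simp
  · have hn := h n ⟨1, by simp⟩
    have := hpos n (by simp)
    have := hpos m (by simp)
    simp only [List.sum_cons] at hn
    omega

theorem exists_graftMany_of_compatible (u : PBT) {ns : List ℕ} (hpos : ∀ n ∈ ns, 0 < n)
    (hsum : ns.sum = leavesCount u) (hu : Compatible (blockBoundaries ns) u) :
    ∃ u₀ us, u = graftMany u₀ us ∧ leavesCount u₀ = ns.length ∧ us.map leavesCount = ns := by
  induction u generalizing ns with
  | leaf =>
    have hns := eq_singleton_of_no_inner_boundary hpos (by simp [hsum, leavesCount]) <| by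
      rintro _ ⟨m, rfl⟩
      have := List.sum_take_le_sum ns m
      simp only [leavesCount] at hsum
      dsimp only
      omega
    rw [hns, hsum]
    exact ⟨.leaf, [.leaf], rfl, rfl, rfl⟩
  | node L R ihL ihR =>
    rcases compatible_node_iff.mp hu with ⟨⟨⟨k, hk⟩, -, -⟩ | hroot, hL, hR⟩
    · obtain ⟨ns₁, ns₂, rfl, hL_sum⟩ : ∃ ns₁ ns₂, ns = ns₁ ++ ns₂ ∧ ns₁.sum = leavesCount L :=
        ⟨ns.take k, ns.drop k, (ns.take_append_drop k).symm, hk⟩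
      rw [← hL_sum, blockBoundaries_append_left] at hL
      rw [← hL_sum, blockBoundaries_append_right] at hR
      simp only [List.sum_append, leavesCount, List.mem_append] at hsum hpos
      obtain ⟨L₀, us₁, rfl, hL₀, hus₁⟩ := ihL (fun n hn => hpos n (.inl hn)) hL_sum hL
      obtain ⟨R₀, us₂, rfl, hR₀, hus₂⟩ := ihR (fun n hn => hpos n (.inr hn)) (by omega) hR
      have hlen : us₁.length = leavesCount L₀ := by rw [hL₀, ← hus₁, List.length_map]
      refine ⟨.node L₀ R₀, us₁ ++ us₂, (graftMany_node_append hlen).symm, ?_, ?_⟩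
      · simp [leavesCount, hL₀, hR₀]
      · simp [hus₁, hus₂]
    · have hns := eq_singleton_of_no_inner_boundary hpos (hsum ▸ leavesCount_pos _)
        (by simpa [hsum, leavesCount] using hroot)
      rw [hns, hsum]
      exact ⟨.leaf, [.node L R], rfl, rfl, rfl⟩

theorem List.forall₂_eq_comp_iff_map_eq {α β : Type*} (f : α → β) (l₁ l₂ : List α) :
    List.Forall₂ (fun a b => f a = f b) l₁ l₂ ↔ l₁.map f = l₂.map f := by
  rw [← List.forall₂_eq_eq_eq, List.forall₂_map_left_iff, List.forall₂_map_right_iff]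

theorem stmt8_general (t0 w0 u : PBT) (ts ws : List PBT)
    (hlen : ts.length = leavesCount t0) (hlen' : ws.length = leavesCount w0)
    (hsz : List.Forall₂ (fun a b => leavesCount a = leavesCount b) ts ws)
    (h1 : tle (graftMany t0 ts) u) (h2 : tle u (graftMany w0 ws)) :
    ∃ (u0 : PBT) (us : List PBT), u = graftMany u0 us ∧
      leavesCount u0 = leavesCount t0 ∧
      List.Forall₂ (fun a b => leavesCount a = leavesCount b) us ts := by
  set ns := ts.map leavesCount
  have hws : ws.map leavesCount = ns := ((List.forall₂_eq_comp_iff_map_eq _ _ _).mp hsz).symm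
  have ht := compatible_graftMany t0 hlen
  have hw := compatible_graftMany w0 hlen'
  rw [hws] at hw
  have hu := ht.of_spansLE hw h1.spansLE h2.spansLE h1.leavesCount_eq
  have hsum : ns.sum = leavesCount u := by rw [← h1.leavesCount_eq, leavesCount_graftMany t0 hlen]
  have hpos : ∀ n ∈ ns, 0 < n := by
    simpa [ns] using fun t _ => leavesCount_pos t
  obtain ⟨u₀, us, rfl, hu₀, hus⟩ := exists_graftMany_of_compatible u hpos hsum hu
  refine ⟨u₀, us, rfl, by rw [hu₀, List.length_map, hlen], ?_⟩
  rwa [List.forall₂_eq_comp_iff_map_eq]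

/-- Any `u` between `t₀ ∘ (t₁,…,t_r)` and `w₀ ∘ (w₁,…,w_r)` in the Tamari
order, where `|tᵢ| = |wᵢ|` for each `i` and `t₀, w₀` have `r` leaves, is itself
of the form `u₀ ∘ (u₁,…,u_r)` with `u₀` having `r` leaves and `|uᵢ| = |tᵢ|`. -/
theorem stmt8 (t0 w0 u : PBT) (ts ws : List PBT)
    (hlen : ts.length = leavesCount t0) (hlen' : ws.length = leavesCount w0)
    (hr : leavesCount t0 = leavesCount w0)
    (hsz : List.Forall₂ (fun a b => leavesCount a = leavesCount b) ts ws)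
    (h1 : tle (graftMany t0 ts) u) (h2 : tle u (graftMany w0 ws)) :
    ∃ (u0 : PBT) (us : List PBT), u = graftMany u0 us ∧
      leavesCount u0 = leavesCount t0 ∧
      List.Forall₂ (fun a b => leavesCount a = leavesCount b) us ts :=
  stmt8_general t0 w0 u ts ws hlen hlen' hsz h1 h2
end

section
/- Let M_{1ₙ} denote the Möbius element of the maximal tree 1ₙ in the Tamari lattice on trees with n leaves (the right comb), defined by M_t = Σ_{w ≤_T t} μ(w,t)·w in the free vector space on trees. Then M_{1ₙ} = | ∨ M_{1ₙ₋₁} − | ⋋ M_{1ₙ₋₁} for n ≥ 3, where ∨ and ⋋ are extended bilinearly. -/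
open Classical

/-- The right comb `1ₙ`: `rightComb n` has `n+1` leaves, so `1ₙ = rightComb (n-1)`. -/
def rightComb : ℕ → PBT
  | 0 => .leaf
  | n + 1 => .node .leaf (rightComb n)

/-- The left comb `0ₙ`: `leftComb n` has `n+1` leaves, so `0ₙ = leftComb (n-1)`. -/
def leftComb : ℕ → PBT
  | 0 => .leaf
  | n + 1 => .node (leftComb n) .leaf

/-!
The Möbius function `μ(·, t)` is the unique function on `Iic t` equal to `1` at `t` whose sum
over every interval `[v, t]`, `v < t`, vanishes; so it suffices to check these two properties
for the right-hand side. Removing the first leaf, `v ↦ v'`, is monotone and inverts both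
`w ↦ | ∨ w` and `w ↦ | ⋋ w`. Moreover `v ≤ | ∨ w` iff `v' ≤ w`, and `v ≤ | ⋋ w` iff `v' ≤ w`
and `v = | ⋋ v'`. Hence the sum of the right-hand side over `[v, 1ₙ]` is
`Σ_{[v', 1ₙ₋₁]} μ(·, 1ₙ₋₁)` minus the same sum when `v = | ⋋ v'`. So it vanishes in that case,
and otherwise unless `v' = 1ₙ₋₁`, which for `v < 1ₙ` forces `v = | ⋋ 1ₙ₋₁`.
-/

open Finset

section LocallyFiniteOrder

variable {α M : Type*} [PartialOrder α] [LocallyFiniteOrder α]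

theorem finsum_ite_le_and_le_eq_sum_Icc [AddCommMonoid M] (f : α → M) (w t : α) :
    (∑ᶠ z, if w ≤ z ∧ z ≤ t then f z else 0) = ∑ z ∈ Icc w t, f z := by
  rw [← finsum_mem_coe_finset, finsum_mem_def]
  congr 1 with z
  simp [Set.indicator_apply]

theorem eq_of_sum_Icc_eq_zero [AddCommGroup M] {t : α} {f g : α → M}
    (hf : ∀ v < t, ∑ z ∈ Icc v t, f z = 0) (hg : ∀ v < t, ∑ z ∈ Icc v t, g z = 0)
    (ht : f t = g t) {v : α} (hv : v ≤ t) : f v = g v := by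
  induction hn : #(Icc v t) using Nat.strong_induction_on generalizing v with
  | _ n ih =>
    obtain rfl | hvt := hv.eq_or_lt
    · exact ht
    have habove : ∀ z ∈ Ioc v t, f z = g z := fun z hz =>
      ih _ (hn ▸ card_lt_card (Icc_ssubset_Icc_left hv (mem_Ioc.1 hz).1 le_rfl))
        (mem_Ioc.1 hz).2 rfl
    have hsum := (hf v hvt).trans (hg v hvt).symm
    rwa [← Ioc_insert_left hv, sum_insert left_notMem_Ioc, sum_insert left_notMem_Ioc,
      sum_congr rfl habove, add_left_inj] at hsum

end LocallyFiniteOrder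

theorem Finsupp.sum_mapDomain_apply_of_injective {α β M : Type*} [AddCommMonoid M] {f : α → β}
    (hf : Function.Injective f) (m : α →₀ M) (s : Finset β) :
    ∑ z ∈ s, mapDomain f m z = ∑ w ∈ s.preimage f hf.injOn, m w := by
  rw [← sum_preimage f s hf.injOn _ fun z _ hz => mapDomain_of_notMem_range m z hz]
  simp only [mapDomain_apply hf]

namespace PBT

theorem leavesCount_pos : ∀ t : PBT, 0 < leavesCount t
  | leaf => Nat.one_pos
  | node a _ => Nat.add_pos_left (leavesCount_pos a) _

def toBinaryTree : PBT → BinaryTree Unit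
  | leaf => .nil
  | node a b => .node () a.toBinaryTree b.toBinaryTree

theorem toBinaryTree_injective : Function.Injective toBinaryTree := by
  intro s t h
  induction s generalizing t with
  | leaf => cases t <;> simp_all [toBinaryTree]
  | node a b iha ihb =>
    cases t with
    | leaf => simp [toBinaryTree] at h
    | node c d =>
      simp only [toBinaryTree, BinaryTree.node.injEq, true_and] at h
      rw [iha h.1, ihb h.2]

theorem numLeaves_toBinaryTree (t : PBT) : t.toBinaryTree.numLeaves = leavesCount t := by
  induction t with
  | leaf => rfl
  | node a b iha ihb => simp [toBinaryTree, leavesCount, iha, ihb]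

theorem finite_setOf_leavesCount_eq (n : ℕ) : {t : PBT | leavesCount t = n}.Finite := by
  refine ((BinaryTree.treesOfNumNodesEq (n - 1)).finite_toSet.preimage
    toBinaryTree_injective.injOn).subset fun t ht => ?_
  have := BinaryTree.numLeaves_eq_numNodes_succ t.toBinaryTree
  simp only [Set.mem_ofPred_eq, numLeaves_toBinaryTree] at ht this
  simp only [Set.mem_preimage, BinaryTree.coe_treesOfNumNodesEq, Set.mem_ofPred_eq]
  omega

/-- A rotation `(a ∨ b) ∨ c ↦ a ∨ (b ∨ c)` raises this weight by the number of leaves of `c`. -/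
def rightWeight : PBT → ℕ
  | leaf => 0
  | node a b => rightWeight a + rightWeight b + leavesCount b

end PBT

namespace TStep

theorem leavesCount_eq_s9 {a b : PBT} (h : TStep a b) : leavesCount a = leavesCount b := by
  induction h <;> simp only [leavesCount] <;> omega

theorem rightWeight_lt {a b : PBT} (h : TStep a b) : a.rightWeight < b.rightWeight := by
  induction h with
  | rot a b c => have := c.leavesCount_pos; simp only [PBT.rightWeight, leavesCount]; omega
  | left c _ ih => simp only [PBT.rightWeight]; omega
  | right a h ih => have := h.leavesCount_eq_s9; simp only [PBT.rightWeight]; omega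

theorem not_to_leaf {a : PBT} : ¬ TStep a .leaf := nofun

end TStep

theorem tle.eq_or_rightWeight_lt {a b : PBT} (h : tle a b) :
    a = b ∨ a.rightWeight < b.rightWeight := by
  induction h with
  | refl => exact .inl rfl
  | tail _ step ih =>
    rcases ih with rfl | hlt
    · exact .inr step.rightWeight_lt
    · exact .inr (hlt.trans step.rightWeight_lt)

instance : PartialOrder PBT where
  le := tle
  le_refl _ := Relation.ReflTransGen.refl
  le_trans _ _ _ := Relation.ReflTransGen.trans
  le_antisymm a b hab hba := by
    rcases hab.eq_or_rightWeight_lt with h | h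
    · exact h
    rcases hba.eq_or_rightWeight_lt with h' | h'
    · exact h'.symm
    · omega

namespace PBT

theorem leavesCount_eq_of_le {a b : PBT} (h : a ≤ b) : leavesCount a = leavesCount b := by
  induction h with
  | refl => rfl
  | tail _ step ih => rw [ih, step.leavesCount_eq_s9]

noncomputable instance : LocallyFiniteOrder PBT :=
  LocallyFiniteOrder.ofFiniteIcc fun a _ => (finite_setOf_leavesCount_eq (leavesCount a)).subset
    fun _ hz => (leavesCount_eq_of_le hz.1).symm

theorem le_of_tStep {a b : PBT} (h : TStep a b) : a ≤ b := Relation.ReflTransGen.single h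

theorem node_le_node_left {a a' : PBT} (c : PBT) (h : a ≤ a') : node a c ≤ node a' c :=
  Relation.ReflTransGen.lift (node · c) (fun _ _ => TStep.left c) _ _ h

theorem node_le_node_right (a : PBT) {c c' : PBT} (h : c ≤ c') : node a c ≤ node a c' :=
  Relation.ReflTransGen.lift (node a) (fun _ _ => TStep.right a) _ _ h

theorem node_rightComb_le_rightComb (a : PBT) (j : ℕ) :
    node a (rightComb j) ≤ rightComb (leavesCount a + j) := by
  induction a generalizing j with
  | leaf => rw [leavesCount, Nat.add_comm]; rfl
  | node x y ihx ihy =>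
    calc node (node x y) (rightComb j)
        ≤ node x (node y (rightComb j)) := le_of_tStep (.rot x y _)
      _ ≤ node x (rightComb (leavesCount y + j)) := node_le_node_right x (ihy j)
      _ ≤ rightComb (leavesCount (node x y) + j) := by
        rw [leavesCount, Nat.add_assoc]; exact ihx _

theorem leavesCount_rightComb (k : ℕ) : leavesCount (rightComb k) = k + 1 := by
  induction k with
  | zero => rfl
  | succ k ih => rw [rightComb, leavesCount, ih, leavesCount, Nat.add_comm]

theorem le_rightComb_iff {t : PBT} {k : ℕ} : t ≤ rightComb k ↔ leavesCount t = k + 1 := by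
  refine ⟨fun h => (leavesCount_eq_of_le h).trans (leavesCount_rightComb k), fun h => ?_⟩
  induction t generalizing k with
  | leaf =>
    obtain rfl : k = 0 := by simp [leavesCount] at h; omega
    rfl
  | node a b _ ihb =>
    have := b.leavesCount_pos
    obtain ⟨j, hj⟩ : ∃ j, leavesCount b = j + 1 := ⟨_, (Nat.succ_pred_eq_of_pos this).symm⟩
    calc node a b ≤ node a (rightComb j) := node_le_node_right a (ihb hj)
      _ ≤ rightComb (leavesCount a + j) := node_rightComb_le_rightComb a j
      _ = rightComb k := by simp only [leavesCount] at h; congr 1; omega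

theorem ne_leaf_of_lt_node {v a b : PBT} (h : v < node a b) : v ≠ leaf := by
  rintro rfl
  have := leavesCount_eq_of_le h.le
  have := a.leavesCount_pos; have := b.leavesCount_pos
  simp only [leavesCount] at *; omega

def dropFirstLeaf : PBT → PBT
  | leaf => leaf
  | node leaf c => c
  | node (node x y) c => node (dropFirstLeaf (node x y)) c

@[simp] theorem dropFirstLeaf_node_leaf (c : PBT) : dropFirstLeaf (node leaf c) = c := rfl

theorem dropFirstLeaf_node_node (x y c : PBT) :
    dropFirstLeaf (node (node x y) c) = node (dropFirstLeaf (node x y)) c := rfl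

theorem dropFirstLeaf_le_of_tStep {v z : PBT} (h : TStep v z) :
    dropFirstLeaf v ≤ dropFirstLeaf z := by
  induction h with
  | rot a b c =>
    cases a with
    | leaf => rfl
    | node x y => exact le_of_tStep (.rot _ _ _)
  | left c h ih =>
    cases h <;> exact node_le_node_left c ih
  | right a h =>
    cases a with
    | leaf => exact le_of_tStep h
    | node x y => exact node_le_node_right _ (le_of_tStep h)

theorem dropFirstLeaf_mono : Monotone dropFirstLeaf := fun _ _ h => by
  induction h with
  | refl => rfl
  | tail _ step ih => exact ih.trans (dropFirstLeaf_le_of_tStep step)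

theorem le_node_leaf_dropFirstLeaf : ∀ {v : PBT}, v ≠ leaf → v ≤ node leaf (dropFirstLeaf v)
  | node leaf _, _ => le_rfl
  | node (node x y) b, _ =>
    calc node (node x y) b ≤ node (node leaf (dropFirstLeaf (node x y))) b :=
          node_le_node_left b (le_node_leaf_dropFirstLeaf PBT.noConfusion)
      _ ≤ node leaf (node (dropFirstLeaf (node x y)) b) := le_of_tStep (.rot _ _ _)

theorem le_node_leaf_iff {v w : PBT} (hv : v ≠ leaf) : v ≤ node leaf w ↔ dropFirstLeaf v ≤ w :=
  ⟨fun h => dropFirstLeaf_mono h,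
    fun h => (le_node_leaf_dropFirstLeaf hv).trans (node_le_node_right leaf h)⟩

theorem eq_of_dropFirstLeaf_eq_node_leaf {v w : PBT} (hv : v ≠ leaf)
    (h : dropFirstLeaf v = node leaf w) :
    v = node leaf (node leaf w) ∨ v = lprod leaf (node leaf w) := by
  match v, hv, h with
  | node leaf _, _, h => exact .inl (by rw [← h]; rfl)
  | node (node leaf leaf) _, _, h => exact .inr (by simp_all [dropFirstLeaf_node_node]; rfl)
  | node (node leaf (node _ _)) _, _, h => simp [dropFirstLeaf_node_node] at h
  | node (node (node _ _) _) _, _, h => simp [dropFirstLeaf_node_node] at h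

@[simp] theorem lprod_leaf_leaf : lprod leaf leaf = node leaf leaf := rfl

@[simp] theorem lprod_leaf_node (a b : PBT) : lprod leaf (node a b) = node (lprod leaf a) b := rfl

theorem lprod_leaf_ne_leaf (w : PBT) : lprod leaf w ≠ leaf := by
  cases w <;> simp

theorem dropFirstLeaf_lprod_leaf (w : PBT) : dropFirstLeaf (lprod leaf w) = w := by
  induction w with
  | leaf => rfl
  | node a b iha _ =>
    obtain ⟨x, y, hxy⟩ : ∃ x y, lprod leaf a = node x y := by cases a <;> simp
    rw [lprod_leaf_node, hxy, dropFirstLeaf_node_node, ← hxy, iha]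

theorem lprod_leaf_injective : Function.Injective (lprod leaf) :=
  Function.LeftInverse.injective dropFirstLeaf_lprod_leaf

theorem leavesCount_lprod_leaf (w : PBT) : leavesCount (lprod leaf w) = leavesCount w + 1 := by
  induction w with
  | leaf => rfl
  | node a b iha _ => simp only [lprod_leaf_node, leavesCount, iha]; omega

theorem lprod_leaf_mono : Monotone (lprod leaf) := fun _ _ h =>
  Relation.ReflTransGen.lift (lprod leaf) (fun _ _ h => by
    induction h with
    | rot a b c => exact .rot _ _ _
    | left c _ ih => exact .left c ih
    | right a h => exact .right _ h) _ _ h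

theorem lprod_leaf_le_node_leaf (w : PBT) : lprod leaf w ≤ node leaf w := by
  induction w with
  | leaf => rfl
  | node a b iha _ =>
    calc node (lprod leaf a) b ≤ node (node leaf a) b := node_le_node_left b iha
      _ ≤ node leaf (node a b) := le_of_tStep (.rot _ _ _)

theorem node_leaf_le_node_leaf_iff {w t : PBT} : node leaf w ≤ node leaf t ↔ w ≤ t :=
  le_node_leaf_iff PBT.noConfusion

theorem lprod_leaf_le_node_leaf_iff {w t : PBT} : lprod leaf w ≤ node leaf t ↔ w ≤ t := by
  refine ⟨fun h => ?_, fun h => (lprod_leaf_le_node_leaf w).trans (node_le_node_right leaf h)⟩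
  simpa only [dropFirstLeaf_lprod_leaf] using (le_node_leaf_iff (lprod_leaf_ne_leaf w)).1 h

theorem exists_lprod_leaf_of_tStep {z t : PBT} (h : TStep z t) :
    ∀ {w}, t = lprod leaf w → ∃ u, z = lprod leaf u := by
  induction h with
  | rot a b c =>
    rintro (_ | ⟨w₁, w₂⟩) hw
    · simp at hw
    · obtain ⟨rfl, -⟩ := node.inj hw
      exact ⟨node (node w₁ b) c, rfl⟩
  | left c h ih =>
    rintro (_ | ⟨w₁, w₂⟩) hw
    · obtain ⟨rfl, -⟩ := node.inj hw
      exact absurd h TStep.not_to_leaf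
    · obtain ⟨h₁, rfl⟩ := node.inj hw
      obtain ⟨u, rfl⟩ := ih h₁
      exact ⟨node u c, rfl⟩
  | @right a c c' h =>
    rintro (_ | ⟨w₁, w₂⟩) hw
    · obtain ⟨-, rfl⟩ := node.inj hw
      exact absurd h TStep.not_to_leaf
    · obtain ⟨rfl, -⟩ := node.inj hw
      exact ⟨node w₁ c, rfl⟩

theorem le_lprod_leaf_iff {v w : PBT} :
    v ≤ lprod leaf w ↔ lprod leaf (dropFirstLeaf v) = v ∧ dropFirstLeaf v ≤ w := by
  refine ⟨fun h => ⟨?_, ?_⟩, fun ⟨hv, h⟩ => hv ▸ lprod_leaf_mono h⟩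
  · obtain ⟨u, rfl⟩ : ∃ u, v = lprod leaf u := by
      induction h using Relation.ReflTransGen.head_induction_on with
      | refl => exact ⟨w, rfl⟩
      | head step _ ih => exact exists_lprod_leaf_of_tStep step ih.choose_spec
    rw [dropFirstLeaf_lprod_leaf]
  · simpa only [dropFirstLeaf_lprod_leaf] using dropFirstLeaf_mono h

theorem eq_leaf_of_lprod_leaf_eq_node_leaf {w t : PBT} (h : lprod leaf w = node leaf t) :
    t = leaf := by
  cases w with
  | leaf => exact (node.inj h).2.symm
  | node a b => exact absurd (node.inj h).1 (lprod_leaf_ne_leaf a)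

theorem node_leaf_injective : Function.Injective (node leaf) := fun _ _ h => (node.inj h).2

theorem preimage_Icc_node_leaf {v t : PBT} (hv : v ≠ leaf) :
    (Icc v (node leaf t)).preimage (node leaf) node_leaf_injective.injOn =
      Icc (dropFirstLeaf v) t := by
  ext w
  simp only [mem_preimage, mem_Icc, le_node_leaf_iff hv, node_leaf_le_node_leaf_iff]

theorem preimage_Icc_lprod_leaf (v t : PBT) :
    (Icc v (node leaf t)).preimage (lprod leaf) lprod_leaf_injective.injOn =
      if lprod leaf (dropFirstLeaf v) = v then Icc (dropFirstLeaf v) t else ∅ := by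
  ext w
  split_ifs with h <;>
    simp [le_lprod_leaf_iff, lprod_leaf_le_node_leaf_iff, h]

variable {M : Type*} [AddCommGroup M]

theorem mapDomain_node_leaf_sub_mapDomain_lprod_leaf_apply_node_leaf (m : PBT →₀ M) {t : PBT}
    (ht : t ≠ leaf) :
    (m.mapDomain (node leaf) - m.mapDomain (lprod leaf)) (node leaf t) = m t := by
  rw [Finsupp.sub_apply, Finsupp.mapDomain_apply node_leaf_injective,
    Finsupp.mapDomain_of_notMem_range, sub_zero]
  rintro ⟨w, hw⟩
  exact ht (eq_leaf_of_lprod_leaf_eq_node_leaf hw)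

theorem mapDomain_node_leaf_sub_mapDomain_lprod_leaf_apply_of_not_le {m : PBT →₀ M} {t v : PBT}
    (hm : ∀ w, ¬ w ≤ t → m w = 0) (hv : ¬ v ≤ node leaf t) :
    (m.mapDomain (node leaf) - m.mapDomain (lprod leaf)) v = 0 := by
  have key : ∀ f : PBT → PBT, (∀ w ≤ t, f w ≤ node leaf t) → m.mapDomain f v = 0 :=
    fun f hf => Finsupp.mapDomain_of_not_mem_image_support fun ⟨w, hw, hwv⟩ =>
      Finsupp.mem_support_iff.1 hw (hm w fun h => hv (hwv ▸ hf w h))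
  rw [Finsupp.sub_apply, key _ fun _ => node_leaf_le_node_leaf_iff.2,
    key _ fun _ => lprod_leaf_le_node_leaf_iff.2, sub_zero]

theorem sum_Icc_mapDomain_node_leaf_sub_mapDomain_lprod_leaf {s : PBT} {m : PBT →₀ M}
    (hm : ∀ u < node leaf s, ∑ w ∈ Icc u (node leaf s), m w = 0) :
    ∀ v < node leaf (node leaf s), ∑ z ∈ Icc v (node leaf (node leaf s)),
      (m.mapDomain (node leaf) - m.mapDomain (lprod leaf)) z = 0 := by
  intro v hv
  have hvleaf := ne_leaf_of_lt_node hv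
  simp only [Finsupp.sub_apply, sum_sub_distrib,
    Finsupp.sum_mapDomain_apply_of_injective node_leaf_injective,
    Finsupp.sum_mapDomain_apply_of_injective lprod_leaf_injective,
    preimage_Icc_node_leaf hvleaf, preimage_Icc_lprod_leaf]
  split_ifs with hq
  · exact sub_self _
  rw [sum_empty, sub_zero]
  refine hm _ (lt_of_le_of_ne ((le_node_leaf_iff hvleaf).1 hv.le) fun h => ?_)
  rcases eq_of_dropFirstLeaf_eq_node_leaf hvleaf h with rfl | hv'
  · exact hv.ne rfl
  · exact hq (by rw [h, ← hv'])

end PBT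

/-- The Möbius element of the right comb `1ₙ` (for `n ≥ 3`) satisfies
`M_{1ₙ} = | ∨ M_{1ₙ₋₁} − | ⋋ M_{1ₙ₋₁}`, where `M t` is the Möbius element
`Σ_{w ≤_T t} μ(w,t)·w` in the free module on trees, encoded as the finitely
supported function with `(M t) w = μ w t`, and `μ` is the Möbius function of
the Tamari order. -/
theorem stmt9
    (μ : PBT → PBT → ℤ) (M : PBT → (PBT →₀ ℤ))
    (hM : ∀ t w : PBT, M t w = μ w t)
    (hμrefl : ∀ t : PBT, μ t t = 1)
    (hμzero : ∀ w t : PBT, ¬ tle w t → μ w t = 0)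
    (hμsum : ∀ w t : PBT, tle w t → w ≠ t →
      (∑ᶠ z : PBT, if tle w z ∧ tle z t then μ z t else 0) = 0)
    (n : ℕ) (hn : 3 ≤ n) :
    M (rightComb (n - 1)) =
      Finsupp.mapDomain (fun w => PBT.node PBT.leaf w) (M (rightComb (n - 2))) -
      Finsupp.mapDomain (fun w => lprod PBT.leaf w) (M (rightComb (n - 2))) := by
  obtain ⟨k, rfl⟩ : ∃ k, n = k + 3 := ⟨n - 3, by omega⟩
  rw [show k + 3 - 1 = k + 2 by omega, show k + 3 - 2 = k + 1 by omega]
  have hMsum : ∀ t, ∀ w < t, ∑ z ∈ Icc w t, M t z = 0 := fun t w hwt => by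
    simp only [hM, ← finsum_ite_le_and_le_eq_sum_Icc]
    exact hμsum w t hwt.le hwt.ne
  have hMself : ∀ t, M t t = 1 := fun t => (hM t t).trans (hμrefl t)
  have hMle : ∀ t w, ¬ w ≤ t → M t w = 0 := fun t w hw => (hM t w).trans (hμzero w t hw)
  change M (.node .leaf (.node .leaf (rightComb k))) =
    (M (.node .leaf (rightComb k))).mapDomain (.node .leaf) -
      (M (.node .leaf (rightComb k))).mapDomain (lprod .leaf)
  ext v
  by_cases hv : v ≤ .node .leaf (.node .leaf (rightComb k))
  · refine eq_of_sum_Icc_eq_zero (hMsum _)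
      (PBT.sum_Icc_mapDomain_node_leaf_sub_mapDomain_lprod_leaf (hMsum _)) ?_ hv
    rw [PBT.mapDomain_node_leaf_sub_mapDomain_lprod_leaf_apply_node_leaf _ (by nofun),
      hMself, hMself]
  · rw [hMle _ _ hv,
      PBT.mapDomain_node_leaf_sub_mapDomain_lprod_leaf_apply_of_not_le (hMle _) hv]
end

section
/- The triple (K[PBT], ⋋, Δ) is a unital infinitesimal bialgebra: for all trees t, w, Δ(t ⋋ w) = Σ t₍₁₎ ⊗ (t₍₂₎ ⋋ w) + Σ (t ⋋ w₍₁₎) ⊗ w₍₂₎ − t ⊗ w. -/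
open Classical

/-- `∨` extended to trees-with-unit, the unit (`none`) acting as a unit. -/
def ovee : Option PBT → Option PBT → Option PBT
  | none, b => b
  | a, none => a
  | some t, some w => some (PBT.node t w)

/-- The coproduct on trees (with values in the free module on pairs of
trees-with-unit): `Δ(t ∨ w) = Σ t₍₁₎ ⊗ (t₍₂₎ ∨ w) + Σ (t ∨ w₍₁₎) ⊗ w₍₂₎ − t ⊗ w`. -/
noncomputable def D0 : PBT → ((Option PBT × Option PBT) →₀ ℤ)
  | .leaf =>
      Finsupp.single (none, some PBT.leaf) 1 + Finsupp.single (some PBT.leaf, none) 1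
  | .node t w =>
      ((D0 t).sum fun p a => a • Finsupp.single (p.1, ovee p.2 (some w)) 1) +
      ((D0 w).sum fun p a => a • Finsupp.single (ovee (some t) p.1, p.2) 1) -
      Finsupp.single (some t, some w) 1

/-- The coproduct `Δ` on the vector space spanned by trees and the unit:
`Δ(1) = 1 ⊗ 1` and on trees it is given by `D0`. -/
noncomputable def D : Option PBT → ((Option PBT × Option PBT) →₀ ℤ)
  | none => Finsupp.single (none, none) 1
  | some t => D0 t

/-- `⋋` extended to trees-with-unit, the unit (`none`) acting as a unit. -/
def olprod : Option PBT → Option PBT → Option PBT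
  | none, b => b
  | a, none => a
  | some t, some w => some (lprod t w)

/-!
Induct on `w`. The base case is `t ⋋ | = t ∨ |`. For the inductive step,
`t ⋋ (u ∨ v) = (t ⋋ u) ∨ v`, so the recursive formula for `Δ` on `∨` together with the
induction hypothesis for `Δ(t ⋋ u)` expands both sides into the same terms: the only
facts needed are `(x ⋋ u) ∨ v = x ⋋ (u ∨ v)` and `t ⋋ (u ∨ x) = (t ⋋ u) ∨ x`, both valid
also when `x` is the unit.
-/

open Finsupp

lemma Finsupp.sum_smul_single_one {α β R : Type*} [Semiring R] (f : α →₀ R) (g : α → β) :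
    (f.sum fun p a => a • single (g p) (1 : R)) = f.mapDomain g :=
  sum_congr fun _ _ => by rw [smul_single_one]

lemma lprod_leaf (t : PBT) : lprod t .leaf = .node t .leaf := rfl

lemma lprod_node (t u v : PBT) : lprod t (.node u v) = .node (lprod t u) v := rfl

lemma ovee_leaf (x : Option PBT) : ovee x (some .leaf) = olprod x (some .leaf) := by
  cases x <;> rfl

lemma ovee_olprod (u v : PBT) (x : Option PBT) :
    ovee (olprod x (some u)) (some v) = olprod x (some (.node u v)) := by
  cases x <;> rfl

lemma olprod_ovee (t u : PBT) (x : Option PBT) :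
    olprod (some t) (ovee (some u) x) = ovee (some (lprod t u)) x := by
  cases x <;> rfl

lemma D0_node (t w : PBT) :
    D0 (.node t w) =
      (D0 t).mapDomain (Prod.map id (ovee · (some w))) +
      (D0 w).mapDomain (Prod.map (ovee (some t)) id) -
      single (some t, some w) 1 := by
  rw [D0, sum_smul_single_one, sum_smul_single_one]
  rfl

lemma D0_lprod (t w : PBT) :
    D0 (lprod t w) =
      (D0 t).mapDomain (Prod.map id (olprod · (some w))) +
      (D0 w).mapDomain (Prod.map (olprod (some t)) id) -
      single (some t, some w) 1 := by
  induction w with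
  | leaf =>
    have hleaf : (D0 .leaf).mapDomain (Prod.map (ovee (some t)) id) =
        (D0 .leaf).mapDomain (Prod.map (olprod (some t)) id) := by
      simp only [D0, mapDomain_add, mapDomain_single]
      rfl
    simp only [lprod_leaf, D0_node, ovee_leaf, hleaf]
  | node u v ihu _ =>
    have hleft : Prod.map id (ovee · (some v)) ∘ Prod.map id (olprod · (some u)) =
        Prod.map (id : Option PBT → Option PBT) (olprod · (some (.node u v))) := by
      funext p
      exact congrArg (p.1, ·) (ovee_olprod u v p.2)
    have hright : Prod.map (olprod (some t)) id ∘ Prod.map (ovee (some u)) id =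
        Prod.map (ovee (some (lprod t u))) (id : Option PBT → Option PBT) := by
      funext p
      exact congrArg (·, p.2) (olprod_ovee t u p.1)
    have hcomm : Prod.map id (ovee · (some v)) ∘ Prod.map (olprod (some t)) id =
        Prod.map (olprod (some t)) id ∘ Prod.map id (ovee · (some v)) := rfl
    rw [lprod_node, D0_node, ihu, D0_node, mapDomain_sub, mapDomain_sub, mapDomain_add,
      mapDomain_add, ← mapDomain_comp, ← mapDomain_comp, ← mapDomain_comp, ← mapDomain_comp,
      hleft, hright, hcomm, mapDomain_single, mapDomain_single]
    simp only [Prod.map, id, ovee, olprod]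
    abel

/-- `(K[PBT], ⋋, Δ)` is a unital infinitesimal bialgebra:
`Δ(t ⋋ w) = Σ t₍₁₎ ⊗ (t₍₂₎ ⋋ w) + Σ (t ⋋ w₍₁₎) ⊗ w₍₂₎ − t ⊗ w`. -/
theorem stmt15 (t w : PBT) :
    D (some (lprod t w)) =
      ((D (some t)).sum fun p a => a • Finsupp.single (p.1, olprod p.2 (some w)) 1) +
      ((D (some w)).sum fun p a => a • Finsupp.single (olprod (some t) p.1, p.2) 1) -
      Finsupp.single (some t, some w) 1 := by
  rw [sum_smul_single_one, sum_smul_single_one]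
  exact D0_lprod t w
end
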